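/- arXiv:0704.3469 — 4 statements merged into one kernel-verified Lean document; each statement's English description precedes it below -/
import Mathlib

section
/- The number of permutations of {1,...,n+1} avoiding 321 and 3412 equals the odd-indexed Fibonacci number F_{2n+1} (with F_1 = F_2 = 1), i.e., the sequence 1, 2, 5, 13, 34, 89, ... -/
/-- `w` contains `p` as a (classical, 1-line) permutation pattern. -/
def ContainsPattern {n k : ℕ} (w : Equiv.Perm (Fin n)) (p : Equiv.Perm (Fin k)) : Prop :=
  ∃ f : Fin k ↪o Fin n, ∀ a b : Fin k, p a < p b ↔ w (f a) < w (f b)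

/-- `w` avoids the pattern `p`. -/
def AvoidsPattern {n k : ℕ} (w : Equiv.Perm (Fin n)) (p : Equiv.Perm (Fin k)) : Prop :=
  ¬ ContainsPattern w p

noncomputable def p321 : Equiv.Perm (Fin 3) := Equiv.ofBijective ![2,1,0] (by decide)
noncomputable def p3412 : Equiv.Perm (Fin 4) := Equiv.ofBijective ![2,3,0,1] (by decide)
noncomputable def p3421 : Equiv.Perm (Fin 4) := Equiv.ofBijective ![2,3,1,0] (by decide)
noncomputable def p4312 : Equiv.Perm (Fin 4) := Equiv.ofBijective ![3,2,0,1] (by decide)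
noncomputable def p4321 : Equiv.Perm (Fin 4) := Equiv.ofBijective ![3,2,1,0] (by decide)
noncomputable def p4231 : Equiv.Perm (Fin 4) := Equiv.ofBijective ![3,1,2,0] (by decide)
noncomputable def p356124 : Equiv.Perm (Fin 6) := Equiv.ofBijective ![2,4,5,0,1,3] (by decide)
noncomputable def p456123 : Equiv.Perm (Fin 6) := Equiv.ofBijective ![3,4,5,0,1,2] (by decide)
noncomputable def p46718235 : Equiv.Perm (Fin 8) := Equiv.ofBijective ![3,5,6,0,7,1,2,4] (by decide)
noncomputable def p46781235 : Equiv.Perm (Fin 8) := Equiv.ofBijective ![3,5,6,7,0,1,2,4] (by decide)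
noncomputable def p56718234 : Equiv.Perm (Fin 8) := Equiv.ofBijective ![4,5,6,0,7,1,2,3] (by decide)
noncomputable def p56781234 : Equiv.Perm (Fin 8) := Equiv.ofBijective ![4,5,6,7,0,1,2,3] (by decide)

/-!
Sort the avoiders of `321` and `3412` by their first entry. A new first entry `0` or `1`, or a
new second entry `0`, never takes part in an occurrence of either pattern, since both patterns
start with their third smallest entry and have their minimum in third position. Conversely an
avoider starting with `k ≥ 2` has `0` as its second entry. So the avoiders of size `n + 2`
starting with `0` or `1` correspond to all avoiders of size `n + 1`, and those starting with
`k + 2` to the avoiders of size `n + 1` starting with `k + 1`. Writing `a n` for their number,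
`a (n + 2) = 2 a (n + 1) + (a (n + 1) - a n)`, which is the recurrence
`F (m + 4) + F m = 3 F (m + 2)` of the odd-indexed Fibonacci numbers.
-/

open Equiv

theorem ContainsPattern.trans {n m k : ℕ} {w : Perm (Fin n)} {u : Perm (Fin m)}
    {π : Perm (Fin k)} (hwu : ContainsPattern w u) (huπ : ContainsPattern u π) :
    ContainsPattern w π := by
  obtain ⟨f, hf⟩ := hwu
  obtain ⟨g, hg⟩ := huπ
  exact ⟨g.trans f, fun a b => (hg a b).trans (hf (g a) (g b))⟩

theorem containsPattern_of_strictMono {n k : ℕ} {w : Perm (Fin n)} {π : Perm (Fin k)}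
    {f e : Fin k → Fin n} (hf : StrictMono f) (he : StrictMono e)
    (hwf : ∀ a, w (f a) = e (π a)) : ContainsPattern w π :=
  ⟨OrderEmbedding.ofStrictMono f hf, fun a b => by
    simp only [OrderEmbedding.coe_ofStrictMono, hwf, he.lt_iff_lt]⟩

theorem containsPattern_p321 {n : ℕ} {w : Perm (Fin n)} {i j l : Fin n} (hij : i < j)
    (hjl : j < l) (h₁ : w l < w j) (h₂ : w j < w i) : ContainsPattern w p321 := by
  refine containsPattern_of_strictMono (f := ![i, j, l]) (e := ![w l, w j, w i]) ?_ ?_ ?_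
  · simp [Fin.strictMono_iff_lt_succ, Fin.forall_fin_two, hij, hjl]
  · simp [Fin.strictMono_iff_lt_succ, Fin.forall_fin_two, h₁, h₂]
  · simp [Fin.forall_fin_succ, p321]

theorem containsPattern_p3412 {n : ℕ} {w : Perm (Fin n)} {i j l m : Fin n} (hij : i < j)
    (hjl : j < l) (hlm : l < m) (h₁ : w l < w m) (h₂ : w m < w i) (h₃ : w i < w j) :
    ContainsPattern w p3412 := by
  refine containsPattern_of_strictMono (f := ![i, j, l, m]) (e := ![w l, w m, w i, w j]) ?_ ?_ ?_
  · simp [Fin.strictMono_iff_lt_succ, Fin.forall_fin_succ, hij, hjl, hlm]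
  · simp [Fin.strictMono_iff_lt_succ, Fin.forall_fin_succ, h₁, h₂, h₃]
  · simp [Fin.forall_fin_succ, p3412]

def Equiv.Perm.insertAt {n : ℕ} (u : Perm (Fin n)) (p v : Fin (n + 1)) : Perm (Fin (n + 1)) :=
  (finSuccEquiv' p).trans (u.optionCongr.trans (finSuccEquiv' v).symm)

namespace Equiv.Perm

variable {n : ℕ} (u : Perm (Fin n)) (p v : Fin (n + 1))

@[simp]
theorem insertAt_apply_self : u.insertAt p v p = v := by
  simp [insertAt]

@[simp]
theorem insertAt_apply_succAbove (j : Fin n) :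
    u.insertAt p v (p.succAbove j) = v.succAbove (u j) := by
  simp [insertAt]

theorem insertAt_injective : Function.Injective fun u : Perm (Fin n) => u.insertAt p v := by
  intro u₁ u₂ h
  ext j : 1
  simpa using congr($h (p.succAbove j))

theorem exists_insertAt_eq {w : Perm (Fin (n + 1))} (hw : w p = v) :
    ∃ u : Perm (Fin n), u.insertAt p v = w := by
  classical
  set σ : Perm (Option (Fin n)) := (finSuccEquiv' p).symm.trans (w.trans (finSuccEquiv' v))
  have hσ : σ none = none := by simp [σ, hw]
  refine ⟨removeNone σ, ?_⟩
  rw [insertAt, map_equiv_removeNone, hσ, swap_self, ← one_def, one_mul]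
  ext x : 1
  simp [σ]

noncomputable def insertAtEquiv : Perm (Fin n) ≃ {w : Perm (Fin (n + 1)) // w p = v} :=
  Equiv.ofBijective (fun u => ⟨u.insertAt p v, u.insertAt_apply_self p v⟩)
    ⟨fun _ _ h => insertAt_injective p v congr(($h).val),
      fun ⟨_, hw⟩ => (exists_insertAt_eq p v hw).imp fun _ h => Subtype.ext h⟩

theorem card_apply_eq_and_eq_card_insertAt (Q : Perm (Fin (n + 1)) → Prop) :
    Nat.card {w : Perm (Fin (n + 1)) // w p = v ∧ Q w} =
      Nat.card {u : Perm (Fin n) // Q (u.insertAt p v)} :=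
  Nat.card_congr (((insertAtEquiv p v).subtypeEquiv fun _ => Iff.rfl).trans
    (Equiv.subtypeSubtypeEquivSubtypeInter _ Q)).symm

theorem containsPattern_insertAt : ContainsPattern (u.insertAt p v) u :=
  ⟨p.succAboveOrderEmb, fun a b => by simp⟩

variable {k : ℕ}

theorem containsPattern_of_insertAt_of_ne {u : Perm (Fin n)} {p v : Fin (n + 1)}
    {π : Perm (Fin k)} (f : Fin k ↪o Fin (n + 1))
    (hf : ∀ a b, π a < π b ↔ u.insertAt p v (f a) < u.insertAt p v (f b)) (hp : ∀ a, f a ≠ p) :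
    ContainsPattern u π := by
  choose g hg using fun a => Fin.exists_succAbove_eq (hp a)
  have hgf : ∀ a b, g a < g b ↔ f a < f b := fun a b => by
    rw [← hg a, ← hg b, Fin.succAbove_lt_succAbove_iff]
  refine ⟨OrderEmbedding.ofStrictMono g fun a b hab => (hgf a b).2 (f.lt_iff_lt.2 hab), ?_⟩
  intro a b
  rw [hf, ← hg a, ← hg b, insertAt_apply_succAbove, insertAt_apply_succAbove,
    Fin.succAbove_lt_succAbove_iff]
  rfl

theorem containsPattern_insertAt_zero_iff {π : Perm (Fin (k + 1))} (hπ : 2 ≤ (π 0).val)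
    (u : Perm (Fin n)) {v : Fin (n + 1)} (hv : v.val ≤ 1) :
    ContainsPattern (u.insertAt 0 v) π ↔ ContainsPattern u π := by
  refine ⟨fun ⟨f, hf⟩ => containsPattern_of_insertAt_of_ne f hf ?_,
    (containsPattern_insertAt u 0 v).trans⟩
  intro a ha
  obtain rfl : a = 0 := f.injective <| le_antisymm (by rw [ha]; exact Fin.zero_le _)
    (f.monotone (Fin.zero_le a))
  have hk : 1 < k + 1 := by have := (π 0).isLt; omega
  have h₁ := (hf (π.symm 0) (π.symm ⟨1, hk⟩)).1 (by simp [Fin.lt_def])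
  have h₂ := (hf (π.symm ⟨1, hk⟩) 0).1 (by simp [Fin.lt_def]; omega)
  rw [ha, insertAt_apply_self] at h₂
  rw [Fin.lt_def] at h₁ h₂
  omega

theorem containsPattern_insertAt_one_zero_iff {π : Perm (Fin (k + 1))} (hπ : 2 ≤ (π.symm 0).val)
    (u : Perm (Fin (n + 1))) :
    ContainsPattern (u.insertAt 1 0) π ↔ ContainsPattern u π := by
  refine ⟨fun ⟨f, hf⟩ => containsPattern_of_insertAt_of_ne f hf ?_,
    (containsPattern_insertAt u 1 0).trans⟩
  intro a ha
  obtain rfl : a = π.symm 0 := by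
    rw [eq_symm_apply]
    by_contra hne
    have h := (hf (π.symm 0) a).1 (by simpa [Fin.pos_iff_ne_zero, eq_comm] using hne)
    rw [ha, insertAt_apply_self] at h
    exact Fin.not_lt_zero _ h
  have h := f.lt_iff_lt.2 (show (⟨0, by omega⟩ : Fin (k + 1)) < ⟨1, by omega⟩ by
    simp [Fin.lt_def])
  have h' := f.lt_iff_lt.2 (show (⟨1, by omega⟩ : Fin (k + 1)) < π.symm 0 by
    rw [Fin.lt_def, Fin.val_mk]; omega)
  rw [ha] at h'
  rw [Fin.lt_def] at h h'
  simp only [Fin.val_one] at h'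
  omega

end Equiv.Perm

theorem Fin.one_lt_of_ne_zero_of_ne_one {n : ℕ} {i : Fin (n + 2)} (h₀ : i ≠ 0) (h₁ : i ≠ 1) :
    1 < i := by
  rw [Ne, Fin.ext_iff, Fin.val_zero] at h₀
  rw [Ne, Fin.ext_iff, Fin.val_one] at h₁
  rw [Fin.lt_def, Fin.val_one]
  omega

def Avoids321And3412 {n : ℕ} (w : Perm (Fin n)) : Prop :=
  AvoidsPattern w p321 ∧ AvoidsPattern w p3412

theorem avoids321And3412_insertAt_zero_iff {n : ℕ} (u : Perm (Fin n)) {v : Fin (n + 1)}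
    (hv : v.val ≤ 1) : Avoids321And3412 (u.insertAt 0 v) ↔ Avoids321And3412 u := by
  simp only [Avoids321And3412, AvoidsPattern,
    Perm.containsPattern_insertAt_zero_iff (π := p321) (by simp [p321]) u hv,
    Perm.containsPattern_insertAt_zero_iff (π := p3412) (by simp [p3412]) u hv]

theorem avoids321And3412_insertAt_one_zero_iff {n : ℕ} (u : Perm (Fin (n + 1))) :
    Avoids321And3412 (u.insertAt 1 0) ↔ Avoids321And3412 u := by
  have h321 : p321.symm 0 = 2 := by rw [symm_apply_eq]; simp [p321]
  have h3412 : p3412.symm 0 = 2 := by rw [symm_apply_eq]; simp [p3412]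
  simp only [Avoids321And3412, AvoidsPattern,
    Perm.containsPattern_insertAt_one_zero_iff (π := p321) (by simp [h321]) u,
    Perm.containsPattern_insertAt_one_zero_iff (π := p3412) (by simp [h3412]) u]

/-- If `w = k b …` with `k ≥ 2` and `b ≠ 0`, then `k b 0` is a `321` when `b < k`; when `b > k`,
the entry `k - 1` forms a `321` with `b` and `0` if it precedes `0`, and `k b 0 (k-1)` is a
`3412` otherwise. -/
theorem Avoids321And3412.apply_one_eq_zero {n : ℕ} {w : Perm (Fin (n + 2))}
    (hw : Avoids321And3412 w) (hk : 2 ≤ (w 0).val) : w 1 = 0 := by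
  by_contra hb
  have hb' : 0 < (w 1).val := Fin.pos_iff_ne_zero.2 hb
  set p := w.symm 0
  have hwp : w p = 0 := w.apply_symm_apply 0
  have h1p : 1 < p := Fin.one_lt_of_ne_zero_of_ne_one
    (fun h => by rw [h] at hwp; simp [hwp] at hk) (fun h => hb (h ▸ hwp))
  rcases lt_or_gt_of_ne (w.injective.ne (show (1 : Fin (n + 2)) ≠ 0 by simp)) with hbk | hbk
  · exact hw.1 (containsPattern_p321 (by simp) h1p (hwp ▸ hb') hbk)
  set q := w.symm ⟨(w 0).val - 1, by omega⟩
  have hwq : (w q).val = (w 0).val - 1 := by simp [q]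
  rw [Fin.lt_def] at hbk
  have hpq : p ≠ q := fun h => by rw [h] at hwp; simp [hwp] at hwq; omega
  have h1q : 1 < q := Fin.one_lt_of_ne_zero_of_ne_one
    (fun h => by rw [h] at hwq; omega) (fun h => by rw [h] at hwq; omega)
  rcases lt_or_gt_of_ne hpq with hpq | hqp
  · exact hw.2 (containsPattern_p3412 (by simp) h1p hpq
      (by rw [Fin.lt_def, hwp, hwq]; simp; omega) (by rw [Fin.lt_def, hwq]; omega) hbk)
  · exact hw.1 (containsPattern_p321 h1q hqp
      (by rw [Fin.lt_def, hwp, hwq]; simp; omega) (by rw [Fin.lt_def, hwq]; omega))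

noncomputable def numAvoiders (n : ℕ) : ℕ :=
  Nat.card {w : Perm (Fin n) // Avoids321And3412 w}

noncomputable def numAvoidersStartingWith (n : ℕ) (k : Fin (n + 1)) : ℕ :=
  Nat.card {w : Perm (Fin (n + 1)) // w 0 = k ∧ Avoids321And3412 w}

theorem numAvoiders_zero : numAvoiders 0 = 1 := by
  have h : ∀ w : Perm (Fin 0), Avoids321And3412 w :=
    fun _ => ⟨fun ⟨f, _⟩ => (f 0).elim0, fun ⟨f, _⟩ => (f 0).elim0⟩
  rw [numAvoiders, Nat.card_congr (Equiv.subtypeUnivEquiv h), Nat.card_unique]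

theorem numAvoiders_succ_eq_sum (n : ℕ) :
    numAvoiders (n + 1) = ∑ k, numAvoidersStartingWith n k := by
  classical
  simp only [numAvoiders, numAvoidersStartingWith, Nat.card_eq_fintype_card,
    Fintype.card_subtype]
  rw [Finset.card_eq_sum_card_fiberwise (f := fun w : Perm (Fin (n + 1)) => w 0)
    (fun _ _ => Finset.mem_univ _)]
  simp only [Finset.filter_filter, and_comm]

theorem numAvoidersStartingWith_zero (n : ℕ) : numAvoidersStartingWith n 0 = numAvoiders n := by
  rw [numAvoidersStartingWith, Perm.card_apply_eq_and_eq_card_insertAt]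
  simp only [avoids321And3412_insertAt_zero_iff _ (v := 0) (by simp)]
  rfl

theorem numAvoidersStartingWith_one (n : ℕ) :
    numAvoidersStartingWith (n + 1) 1 = numAvoiders (n + 1) := by
  rw [numAvoidersStartingWith, Perm.card_apply_eq_and_eq_card_insertAt]
  simp only [avoids321And3412_insertAt_zero_iff (n := n + 1) _ (v := 1) (Fin.val_one n).le]
  rfl

theorem numAvoidersStartingWith_succ_succ (n : ℕ) (k : Fin n) :
    numAvoidersStartingWith (n + 1) k.succ.succ = numAvoidersStartingWith n k.succ := by
  have hfix : ∀ w : Perm (Fin (n + 2)), w 0 = k.succ.succ ∧ Avoids321And3412 w ↔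
      w 1 = 0 ∧ w 0 = k.succ.succ ∧ Avoids321And3412 w := fun w =>
    ⟨fun h => ⟨h.2.apply_one_eq_zero (by simp [h.1]), h⟩, And.right⟩
  have h0 : ∀ u : Perm (Fin (n + 1)), u.insertAt 1 0 0 = (u 0).succ := fun u => by
    simpa using u.insertAt_apply_succAbove 1 0 0
  rw [numAvoidersStartingWith, Nat.card_congr (Equiv.subtypeEquivRight hfix),
    Perm.card_apply_eq_and_eq_card_insertAt]
  simp only [h0, Fin.succ_inj, avoids321And3412_insertAt_one_zero_iff]
  rfl

theorem numAvoiders_succ (n : ℕ) :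
    numAvoiders (n + 1) = numAvoiders n + ∑ k : Fin n, numAvoidersStartingWith n k.succ := by
  rw [numAvoiders_succ_eq_sum, Fin.sum_univ_succ, numAvoidersStartingWith_zero]

theorem numAvoiders_succ_succ (n : ℕ) :
    numAvoiders (n + 2) =
      2 * numAvoiders (n + 1) + ∑ k : Fin n, numAvoidersStartingWith n k.succ := by
  rw [numAvoiders_succ_eq_sum, Fin.sum_univ_succ, Fin.sum_univ_succ, Fin.succ_zero_eq_one,
    numAvoidersStartingWith_zero, numAvoidersStartingWith_one]
  simp only [numAvoidersStartingWith_succ_succ]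
  ring

theorem numAvoiders_add_two_add (n : ℕ) :
    numAvoiders (n + 2) + numAvoiders n = 3 * numAvoiders (n + 1) := by
  rw [numAvoiders_succ_succ, numAvoiders_succ n]
  ring

theorem Nat.fib_add_four_add_fib (n : ℕ) : fib (n + 4) + fib n = 3 * fib (n + 2) := by
  have h₁ : fib (n + 2) = fib n + fib (n + 1) := fib_add_two
  have h₂ : fib (n + 3) = fib (n + 1) + fib (n + 2) := fib_add_two
  have h₃ : fib (n + 4) = fib (n + 2) + fib (n + 3) := fib_add_two
  omega

theorem numAvoiders_succ_eq_fib (n : ℕ) : numAvoiders (n + 1) = Nat.fib (2 * n + 1) := by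
  induction n using Nat.twoStepInduction with
  | zero => rw [numAvoiders_succ, numAvoiders_zero]; rfl
  | one => rw [numAvoiders_succ_succ, numAvoiders_succ, numAvoiders_zero]; rfl
  | more n ih₀ ih₁ =>
    have h := numAvoiders_add_two_add (n + 1)
    have hfib := Nat.fib_add_four_add_fib (2 * n + 1)
    rw [show 2 * (n + 1) + 1 = 2 * n + 1 + 2 by ring] at ih₁
    rw [show 2 * (n + 2) + 1 = 2 * n + 1 + 4 by ring]
    change numAvoiders (n + 1 + 2) = _
    omega

/-- The number of permutations of `{1,…,n+1}` avoiding 321 and 3412 is the odd-indexed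
Fibonacci number `F (2n+1)` (with `F 1 = F 2 = 1`): 1, 2, 5, 13, 34, 89, … . -/
theorem stmt_3 (n : ℕ) :
    Nat.card {w : Equiv.Perm (Fin (n + 1)) //
      AvoidsPattern w p321 ∧ AvoidsPattern w p3412} = Nat.fib (2 * n + 1) :=
  numAvoiders_succ_eq_fib n
end

section
/- The number of permutations of {1,...,n+1} avoiding the pattern 321 equals the Catalan number C_{n+1}. -/
/-!
The running maximum `m i = max_{j ≤ i} w j` of a permutation `w` of `Fin N` is monotone with
`i ≤ m i`; call such sequences staircases. `w` avoids 321 iff its entries lying below the running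
maximum increase, so `w` is recovered from `m`: at the records of `m` it takes the value of `m`,
and the other positions carry the missing values in increasing order. Conversely this filling turns
every staircase `m` into a 321-avoiding permutation with running maximum `m`. Finally, a staircase
of length `N + 1` splits at its first fixed point `k` into staircases of lengths `k` and `N - k`,
which is the Catalan recursion.
-/

open Finset Equiv

variable {N : ℕ}

theorem containsPattern_p321_iff (w : Perm (Fin N)) :
    ContainsPattern w p321 ↔ ∃ i j k, i < j ∧ j < k ∧ w k < w j ∧ w j < w i := by
  constructor
  · rintro ⟨f, hf⟩
    exact ⟨f 0, f 1, f 2, f.strictMono (by decide), f.strictMono (by decide),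
      (hf 2 1).1 (by decide), (hf 1 0).1 (by decide)⟩
  · rintro ⟨i, j, k, hij, hjk, hkj, hji⟩
    have hmono : StrictMono ![i, j, k] := Fin.strictMono_iff_lt_succ.2 <| by
      simp [Fin.forall_fin_succ, hij, hjk]
    have hanti : StrictAnti (w ∘ ![i, j, k]) := Fin.strictAnti_iff_succ_lt.2 <| by
      simp [Fin.forall_fin_succ, hkj, hji]
    have hp321 : ∀ a b : Fin 3, p321 a < p321 b ↔ b < a := by decide
    exact ⟨OrderEmbedding.ofStrictMono _ hmono, fun a b => (hp321 a b).trans hanti.lt_iff_gt.symm⟩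

def runMax (w : Perm (Fin N)) (i : Fin N) : Fin N := (Iic i).sup' nonempty_Iic w

section runMax
variable (w : Perm (Fin N))

theorem le_runMax {i j : Fin N} (h : j ≤ i) : w j ≤ runMax w i :=
  le_sup' w (mem_Iic.2 h)

theorem exists_le_apply_eq_runMax (i : Fin N) : ∃ j ≤ i, w j = runMax w i := by
  obtain ⟨j, hj, hmax⟩ := exists_mem_eq_sup' (nonempty_Iic (a := i)) w
  exact ⟨j, mem_Iic.1 hj, hmax.symm⟩

theorem runMax_mono : Monotone (runMax w) :=
  fun _ _ h => sup'_mono w (Iic_subset_Iic.2 h) nonempty_Iic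

theorem le_runMax_self (i : Fin N) : i ≤ runMax w i := by
  have hcard : #(Iic i) ≤ #(Iic (runMax w i)) :=
    card_le_card_of_injOn w (fun j hj => mem_Iic.2 (le_runMax w (mem_Iic.1 hj)))
      w.injective.injOn
  rw [Fin.card_Iic, Fin.card_Iic] at hcard
  exact Fin.le_def.2 (by omega)

theorem lt_runMax_iff {i : Fin N} : w i < runMax w i ↔ ∃ j < i, runMax w j = runMax w i := by
  obtain ⟨l, hli, hl⟩ := exists_le_apply_eq_runMax w i
  constructor
  · intro hi
    have hli : l < i := lt_of_le_of_ne hli (by rintro rfl; exact hi.ne hl)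
    exact ⟨l, hli, le_antisymm (runMax_mono w hli.le) (hl ▸ le_runMax w le_rfl)⟩
  · rintro ⟨j, hji, hj⟩
    obtain ⟨l', hl'j, hl'⟩ := exists_le_apply_eq_runMax w j
    refine lt_of_le_of_ne (le_runMax w le_rfl) fun he => ?_
    have : i = l' := w.injective (he.trans (hl'.trans hj).symm)
    exact (hl'j.trans_lt hji).ne' this

theorem apply_eq_runMax_iff {i : Fin N} : w i = runMax w i ↔ ∀ j < i, runMax w j ≠ runMax w i := by
  rw [← (le_runMax w le_rfl).not_lt_iff_eq, lt_runMax_iff]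
  simp only [not_exists, not_and, ne_eq]

end runMax

theorem avoidsPattern_p321_iff_strictMonoOn (w : Perm (Fin N)) :
    AvoidsPattern w p321 ↔ StrictMonoOn w {i | w i < runMax w i} := by
  rw [AvoidsPattern, containsPattern_p321_iff]
  constructor
  · intro h i (hi : w i < runMax w i) j _ hij
    by_contra hji
    have hji : w j < w i := lt_of_le_of_ne (not_lt.1 hji) (w.injective.ne hij.ne')
    obtain ⟨l, hli, hl⟩ := exists_le_apply_eq_runMax w i
    rw [← hl] at hi
    exact h ⟨l, i, j, lt_of_le_of_ne hli (by rintro rfl; exact hi.false), hij, hji, hi⟩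
  · rintro h ⟨i, j, k, hij, hjk, hkj, hji⟩
    have hj : w j < runMax w j := hji.trans_le (le_runMax w hij.le)
    have hk : w k < runMax w k := hkj.trans_le (le_runMax w hjk.le)
    exact (h hj hk hjk).not_gt hkj

/-- Were `u i < u' i`, the value `u i` would occur in `u'` at a non-record position before `i`,
where `u` and `u'` agree. -/
theorem le_apply_of_runMax_eq {u u' : Perm (Fin N)} (h : runMax u = runMax u')
    (hu' : StrictMonoOn u' {i | u' i < runMax u' i}) {i : Fin N}
    (hbelow : ∀ j < i, u j = u' j) : u' i ≤ u i := by
  by_contra! hlt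
  have hrec : ∀ j, u j = runMax u j ↔ u' j = runMax u' j := fun j => by
    rw [apply_eq_runMax_iff, apply_eq_runMax_iff, h]
  have hi : u' i < runMax u' i := by
    refine (le_runMax u' le_rfl).lt_of_ne fun he => ?_
    exact hlt.ne (((hrec i).2 he).trans (h ▸ he.symm))
  set j := u'.symm (u i)
  have hj : u' j = u i := u'.apply_symm_apply _
  by_cases hjrec : u' j = runMax u' j
  · have hji : j = i := u.injective ((((hrec j).2 hjrec).trans (h ▸ hjrec.symm)).trans hj)
    exact hi.ne (hji ▸ hjrec)
  · have hji : j < i := (hu'.lt_iff_lt ((le_runMax u' le_rfl).lt_of_ne hjrec) hi).1 (hj ▸ hlt)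
    exact hji.ne (u.injective ((hbelow j hji).trans hj))

theorem eq_of_runMax_eq {w w' : Perm (Fin N)} (hw : AvoidsPattern w p321)
    (hw' : AvoidsPattern w' p321) (h : runMax w = runMax w') : w = w' := by
  rw [avoidsPattern_p321_iff_strictMonoOn] at hw hw'
  ext1 i
  induction i using WellFoundedLT.induction with
  | ind i ih =>
    exact le_antisymm (le_apply_of_runMax_eq h.symm hw fun j hj => (ih j hj).symm)
      (le_apply_of_runMax_eq h hw' ih)

theorem card_filter_lt_orderIso {α β : Type*} [LinearOrder α] [LinearOrder β] {s : Finset α}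
    {t : Finset β} (e : s ≃o t) (x : s) :
    #{y ∈ t | y < (e x : β)} = #{y ∈ s | y < (x : α)} := by
  symm
  refine card_bij (fun y hy => (e ⟨y, (mem_filter.1 hy).1⟩ : β)) ?_ ?_ ?_
  · intro y hy
    exact mem_filter.2 ⟨coe_mem _, e.lt_iff_lt.2 (Subtype.mk_lt_mk.2 (mem_filter.1 hy).2)⟩
  · intro y₁ _ y₂ _ h
    simpa using e.injective (Subtype.ext h)
  · intro z hz
    obtain ⟨hzt, hzx⟩ := mem_filter.1 hz
    refine ⟨e.symm ⟨z, hzt⟩, mem_filter.2 ⟨coe_mem _, ?_⟩, by simp⟩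
    have : e.symm ⟨z, hzt⟩ < x := by
      rw [← e.lt_iff_lt, e.apply_symm_apply]
      exact hzx
    exact this

theorem card_filter_lt_add_card_compl_filter_lt (s : Finset (Fin N)) (p : Fin N) :
    #{q ∈ s | q < p} + #{q ∈ sᶜ | q < p} = p := by
  rw [← Fin.card_Iio p, ← card_filter_add_card_filter_not (s := Iio p) (· ∈ s)]
  congr 2 <;> ext q <;> simp [and_comm]

def records (m : Fin N → Fin N) : Finset (Fin N) := {i | ∀ j < i, m j < m i}

theorem strictMonoOn_records (m : Fin N → Fin N) : StrictMonoOn m (records m) :=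
  fun _ _ _ hj hij => (mem_filter.1 hj).2 _ hij

section records
variable {m : Fin N → Fin N}

theorem exists_mem_records_le_eq (hm : Monotone m) (i : Fin N) :
    ∃ r ∈ records m, r ≤ i ∧ m r = m i := by
  induction i using WellFoundedLT.induction with
  | ind i ih =>
    by_cases hi : i ∈ records m
    · exact ⟨i, hi, le_rfl, rfl⟩
    · obtain ⟨j, hji, hj⟩ : ∃ j < i, m i ≤ m j := by simpa [records] using hi
      obtain ⟨r, hr, hrj, hmr⟩ := ih j hji
      exact ⟨r, hr, hrj.trans hji.le, hmr.trans (le_antisymm (hm hji.le) hj)⟩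

theorem image_records (hm : Monotone m) : (records m).image m = univ.image m := by
  refine (image_subset_image (subset_univ _)).antisymm fun x hx => ?_
  obtain ⟨i, -, rfl⟩ := mem_image.1 hx
  obtain ⟨r, hr, -, hri⟩ := exists_mem_records_le_eq hm i
  exact mem_image.2 ⟨r, hr, hri⟩

theorem card_compl_records (hm : Monotone m) : #(records m)ᶜ = #(univ.image m)ᶜ := by
  rw [card_compl, card_compl, ← image_records hm,
    card_image_of_injOn (strictMonoOn_records m).injOn]

noncomputable def fillIso (hm : Monotone m) :
    ((records m)ᶜ : Finset (Fin N)) ≃o ((univ.image m)ᶜ : Finset (Fin N)) :=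
  ((records m)ᶜ.orderIsoOfFin rfl).symm.trans ((univ.image m)ᶜ.orderIsoOfFin
    (card_compl_records hm).symm)

noncomputable def fillFun (hm : Monotone m) (i : Fin N) : Fin N :=
  if h : i ∈ records m then m i else fillIso hm ⟨i, mem_compl.2 h⟩

theorem fillFun_injective (hm : Monotone m) : Function.Injective (fillFun hm) := by
  have hval : ∀ x i, (fillIso hm x : Fin N) ≠ m i := fun x i he =>
    mem_compl.1 (fillIso hm x).2 (he ▸ mem_image_of_mem m (mem_univ i))
  intro i j h
  unfold fillFun at h
  split_ifs at h with hi hj hj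
  · exact (strictMonoOn_records m).injOn hi hj h
  · exact (hval _ i h.symm).elim
  · exact (hval _ j h).elim
  · simpa using (fillIso hm).injective (Subtype.ext h)

noncomputable def fillPerm (hm : Monotone m) : Perm (Fin N) :=
  Equiv.ofBijective (fillFun hm) (Finite.injective_iff_bijective.1 (fillFun_injective hm))

theorem fillPerm_of_mem (hm : Monotone m) {i : Fin N} (hi : i ∈ records m) :
    fillPerm hm i = m i :=
  dif_pos hi

theorem fillPerm_of_notMem (hm : Monotone m) {i : Fin N} (hi : i ∉ records m) :
    fillPerm hm i = fillIso hm ⟨i, mem_compl.2 hi⟩ :=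
  dif_neg hi

theorem card_image_lt_lt_card_records_lt (hm : Monotone m) {p : Fin N} (hp : p ∉ records m) :
    #{v ∈ univ.image m | v < m p} < #{r ∈ records m | r < p} := by
  obtain ⟨j, hjp, hj⟩ : ∃ j < p, m p ≤ m j := by simpa [records] using hp
  obtain ⟨r, hr, hrj, hmr⟩ := exists_mem_records_le_eq hm j
  have hmr : m r = m p := hmr.trans (le_antisymm (hm hjp.le) hj)
  refine (card_lt_card ((ssubset_iff_of_subset fun v hv => ?_).2 ⟨m r, ?_, ?_⟩)).trans_le
    (card_image_le (f := m))
  · obtain ⟨hvV, hvp⟩ := mem_filter.1 hv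
    rw [← image_records hm] at hvV
    obtain ⟨q, hq, rfl⟩ := mem_image.1 hvV
    exact mem_image_of_mem m (mem_filter.2 ⟨hq, hm.reflect_lt hvp⟩)
  · exact mem_image_of_mem m (mem_filter.2 ⟨hr, hrj.trans_lt hjp⟩)
  · simp [hmr]

/-- The `k`-th non-record `p` receives the `k`-th value missed by `m`, and `i ≤ m i` leaves more
than `k` missed values below `m p`. -/
theorem fillPerm_lt (hm : Monotone m) (hle : ∀ i, i ≤ m i) {p : Fin N} (hp : p ∉ records m) :
    fillPerm hm p < m p := by
  by_contra! hx
  have hiso := card_filter_lt_orderIso (fillIso hm) ⟨p, mem_compl.2 hp⟩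
  rw [← fillPerm_of_notMem hm hp] at hiso
  have hsub : #{v ∈ (univ.image m)ᶜ | v < m p} ≤ #{v ∈ (univ.image m)ᶜ | v < fillPerm hm p} :=
    card_le_card fun v hv => by
      rw [mem_filter] at hv ⊢
      exact ⟨hv.1, hv.2.trans_le hx⟩
  have hR := card_filter_lt_add_card_compl_filter_lt (records m) p
  have hV := card_filter_lt_add_card_compl_filter_lt (univ.image m) (m p)
  have hlt := card_image_lt_lt_card_records_lt hm hp
  have hp := Fin.le_def.1 (hle p)
  simp only at hiso
  omega

theorem fillPerm_le (hm : Monotone m) (hle : ∀ i, i ≤ m i) (i : Fin N) : fillPerm hm i ≤ m i := by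
  by_cases hi : i ∈ records m
  · exact (fillPerm_of_mem hm hi).le
  · exact (fillPerm_lt hm hle hi).le

theorem runMax_fillPerm (hm : Monotone m) (hle : ∀ i, i ≤ m i) : runMax (fillPerm hm) = m := by
  funext i
  refine le_antisymm (sup'_le _ _ fun j hj => (fillPerm_le hm hle j).trans (hm (mem_Iic.1 hj)))
    ?_
  obtain ⟨r, hr, hri, hmr⟩ := exists_mem_records_le_eq hm i
  exact hmr ▸ fillPerm_of_mem hm hr ▸ le_runMax _ hri

theorem avoidsPattern_fillPerm (hm : Monotone m) (hle : ∀ i, i ≤ m i) :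
    AvoidsPattern (fillPerm hm) p321 := by
  rw [avoidsPattern_p321_iff_strictMonoOn, runMax_fillPerm hm hle]
  have hmono : StrictMonoOn (fillPerm hm) {i | i ∉ records m} := fun i hi j hj hij => by
    rw [fillPerm_of_notMem hm hi, fillPerm_of_notMem hm hj]
    exact (fillIso hm).strictMono (Subtype.mk_lt_mk.2 hij)
  exact hmono.mono fun i (hi : fillPerm hm i < m i) hr => hi.ne (fillPerm_of_mem hm hr)

end records

abbrev Staircase (N : ℕ) := {f : Fin N → Fin N // Monotone f ∧ ∀ i, i ≤ f i}

namespace Staircase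

theorem le_apply (f : Staircase N) (i : ℕ) (hi : i < N) : i ≤ f.1 ⟨i, hi⟩ := f.2.2 ⟨i, hi⟩

theorem apply_le_apply (f : Staircase N) {i j : ℕ} (hi : i < N) (hj : j < N) (h : i ≤ j) :
    (f.1 ⟨i, hi⟩ : ℕ) ≤ f.1 ⟨j, hj⟩ :=
  f.2.1 (Fin.mk_le_mk.2 h)

theorem apply_last (f : Staircase (N + 1)) : f.1 (Fin.last N) = Fin.last N :=
  le_antisymm (Fin.le_last _) (f.2.2 _)

noncomputable def firstFix (f : Staircase (N + 1)) : Fin (N + 1) :=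
  ({i | f.1 i = i} : Finset (Fin (N + 1))).min' ⟨Fin.last N, by simpa using f.apply_last⟩

theorem firstFix_eq_iff {f : Staircase (N + 1)} {k : Fin (N + 1)} :
    firstFix f = k ↔ f.1 k = k ∧ ∀ i < k, i < f.1 i := by
  constructor
  · rintro rfl
    have hmin := min'_mem ({i | f.1 i = i} : Finset (Fin (N + 1)))
      ⟨Fin.last N, by simpa using f.apply_last⟩
    refine ⟨(mem_filter.1 hmin).2, fun i hi => (f.2.2 i).lt_of_ne fun h => ?_⟩
    exact hi.not_ge (min'_le ({i | f.1 i = i} : Finset (Fin (N + 1))) i (by simpa using h.symm))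
  · rintro ⟨hk, hlt⟩
    refine le_antisymm (min'_le _ _ (by simpa using hk)) (le_min' _ _ _ fun i hi => ?_)
    exact not_lt.1 fun h => (hlt i h).ne (by simpa using hi : f.1 i = i).symm

def upper (f : Staircase (N + 1)) (k : Fin (N + 1)) : Staircase (N - k) :=
  ⟨fun j => ⟨(f.1 ⟨k + 1 + j, by omega⟩ : ℕ) - (k + 1), by
      have := j.isLt
      omega⟩,
    fun a b (hab : (a : ℕ) ≤ b) => by
      have := f.apply_le_apply (i := k + 1 + a) (j := k + 1 + b) (by omega) (by omega) (by omega)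
      simp only [Fin.mk_le_mk]
      omega,
    fun j => by
      have := f.le_apply (k + 1 + j) (by omega)
      simp only [Fin.le_def]
      omega⟩

theorem lt_apply_of_firstFix_eq {f : Staircase (N + 1)} {k : Fin (N + 1)} (hk : firstFix f = k)
    {i : ℕ} (hi : i < k) : i < f.1 ⟨i, by omega⟩ :=
  (firstFix_eq_iff.1 hk).2 ⟨i, by omega⟩ hi

theorem apply_le_of_firstFix_eq {f : Staircase (N + 1)} {k : Fin (N + 1)} (hk : firstFix f = k)
    {i : ℕ} (hi : i ≤ k) : (f.1 ⟨i, by omega⟩ : ℕ) ≤ k := by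
  have := f.apply_le_apply (by omega) k.isLt hi
  rwa [(firstFix_eq_iff.1 hk).1] at this

def lower (f : Staircase (N + 1)) {k : Fin (N + 1)} (hk : firstFix f = k) : Staircase k :=
  ⟨fun i => ⟨(f.1 ⟨i, by omega⟩ : ℕ) - 1, by
      have := apply_le_of_firstFix_eq hk i.isLt.le
      have := lt_apply_of_firstFix_eq hk i.isLt
      omega⟩,
    fun a b (hab : (a : ℕ) ≤ b) => by
      have := f.apply_le_apply (i := a) (j := b) (by omega) (by omega) hab
      simp only [Fin.mk_le_mk]
      omega,
    fun i => by
      have := lt_apply_of_firstFix_eq hk i.isLt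
      simp only [Fin.le_def]
      omega⟩

def glue (k : Fin (N + 1)) (g : Staircase k) (h : Staircase (N - k)) : Staircase (N + 1) :=
  ⟨fun i =>
    if hi : (i : ℕ) < k then ⟨g.1 ⟨i, hi⟩ + 1, by omega⟩
    else if hik : (i : ℕ) = k then k
    else ⟨h.1 ⟨i - (k + 1), by omega⟩ + (k + 1), by
      omega⟩,
    fun a b (hab : (a : ℕ) ≤ b) => by
      simp only [Fin.le_def]
      split_ifs <;> (try dsimp only) <;> first
        | omega
        | (have := g.apply_le_apply (i := a) (j := b) (by omega) (by omega) hab; omega)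
        | (have := h.apply_le_apply (i := a - (k + 1)) (j := b - (k + 1)) (by omega) (by omega)
            (by omega); omega),
    fun i => by
      simp only [Fin.le_def]
      split_ifs with hi hik
      · have := g.le_apply i hi
        dsimp only
        omega
      · omega
      · have := h.le_apply (i - (k + 1)) (by omega)
        dsimp only
        omega⟩

theorem firstFix_glue (k : Fin (N + 1)) (g : Staircase k) (h : Staircase (N - k)) :
    firstFix (glue k g h) = k := by
  refine firstFix_eq_iff.2 ⟨by simp [glue], fun i (hi : (i : ℕ) < k) => ?_⟩
  have := g.le_apply i hi
  simp only [glue, dif_pos hi, Fin.lt_def]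
  omega

theorem glue_lower_upper {f : Staircase (N + 1)} {k : Fin (N + 1)} (hk : firstFix f = k) :
    glue k (lower f hk) (upper f k) = f := by
  refine Subtype.ext (funext fun i => Fin.ext ?_)
  simp only [glue, lower, upper, Fin.eta]
  split_ifs with hi hik
  · have := lt_apply_of_firstFix_eq hk hi
    simp only [Fin.eta] at this
    dsimp only
    omega
  · obtain rfl : i = k := Fin.ext hik
    exact congrArg Fin.val (firstFix_eq_iff.1 hk).1.symm
  · have hfi : (i : ℕ) ≤ f.1 i := f.2.2 i
    have e : (k : ℕ) + 1 + (i - (k + 1)) = i := by omega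
    simp only [e, Fin.eta]
    omega

theorem lower_glue (k : Fin (N + 1)) (g : Staircase k) (h : Staircase (N - k)) :
    lower (glue k g h) (firstFix_glue k g h) = g :=
  Subtype.ext (funext fun i => Fin.ext (by simp only [glue, lower, dif_pos i.isLt]; simp))

theorem upper_glue (k : Fin (N + 1)) (g : Staircase k) (h : Staircase (N - k)) :
    upper (glue k g h) k = h := by
  refine Subtype.ext (funext fun i => Fin.ext ?_)
  have h₁ : ¬ (k : ℕ) + 1 + i < k := by omega
  have h₂ : ¬ (k : ℕ) + 1 + i = k := by omega
  simp only [glue, upper, dif_neg h₁, dif_neg h₂]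
  simp

noncomputable def fiberEquiv (k : Fin (N + 1)) :
    {f : Staircase (N + 1) // firstFix f = k} ≃ Staircase k × Staircase (N - k) where
  toFun f := (lower f.1 f.2, upper f.1 k)
  invFun p := ⟨glue k p.1 p.2, firstFix_glue k p.1 p.2⟩
  left_inv f := Subtype.ext (glue_lower_upper f.2)
  right_inv p := Prod.ext (lower_glue k p.1 p.2) (upper_glue k p.1 p.2)

end Staircase

theorem card_staircase (N : ℕ) : Nat.card (Staircase N) = catalan N := by
  induction N using Nat.strong_induction_on with
  | _ N ih =>
    cases N with
    | zero =>
      rw [catalan_zero, Nat.card_eq_one_iff_unique]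
      exact ⟨inferInstance, ⟨⟨Fin.elim0, fun i => i.elim0, (·.elim0)⟩⟩⟩
    | succ N =>
      rw [Nat.card_congr (Equiv.sigmaFiberEquiv Staircase.firstFix).symm, Nat.card_sigma,
        catalan_succ]
      refine sum_congr rfl fun k _ => ?_
      rw [Nat.card_congr (Staircase.fiberEquiv k), Nat.card_prod, ih k (by omega),
        ih (N - k) (by omega)]

noncomputable def avoiders321EquivStaircase :
    {w : Perm (Fin N) // AvoidsPattern w p321} ≃ Staircase N where
  toFun w := ⟨runMax w.1, runMax_mono w.1, le_runMax_self w.1⟩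
  invFun f := ⟨fillPerm f.2.1, avoidsPattern_fillPerm f.2.1 f.2.2⟩
  left_inv w := Subtype.ext (eq_of_runMax_eq (avoidsPattern_fillPerm _ (le_runMax_self w.1)) w.2
    (runMax_fillPerm _ (le_runMax_self w.1)))
  right_inv f := Subtype.ext (runMax_fillPerm f.2.1 f.2.2)

/-- The number of permutations of `{1,…,n+1}` avoiding 321 is the Catalan number `C (n+1)`. -/
theorem stmt_4 (n : ℕ) :
    Nat.card {w : Equiv.Perm (Fin (n + 1)) // AvoidsPattern w p321} = catalan (n + 1) := by
  rw [Nat.card_congr avoiders321EquivStaircase, card_staircase]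
end

section
/- Let C(x) = (1 − 2x − √(1−4x))/(2x^2) be the generating function with C(x) = ∑_{n≥0} C_{n+1} x^n where C_m is the m-th Catalan number (so C(x) = 1 + 2x + 5x^2 + 14x^3 + ...). Define L(x) = (1−x)C(x) − 1 and M(x) = (1−x)^2 C(x) − 1. Then the formal power series G(x) = C(x) + L(x)^2/(1 − x − M(x)) equals 2x / (−1 + 4x − 2x^2 + √(1−4x)) as formal power series, and its coefficients begin 1, 2, 6, 21, 78, 298, 1157, 4539. -/
/-!
Write `c = 1 + xC` for the Catalan series; its equation `c = 1 + xc²` reads `C = (1 + xC)²`.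
Modulo this relation `G` simplifies to `1/(1 - x - xC)`, and `√(1-4x) = 1 - 2x - 2x²C` (a square
root with constant term 1 is unique), so the denominator `-1 + 4x - 2x² + √(1-4x)` is
`2x(1 - x - xC)`. The coefficients follow from the recursion `g_{n+1} = g_n + ∑_{i+j=n} C_{i+1} g_j`
encoded in `G(1 - x - xC) = 1`.
-/

open PowerSeries Finset

theorem catalan_four_to_seven :
    catalan 4 = 14 ∧ catalan 5 = 42 ∧ catalan 6 = 132 ∧ catalan 7 = 429 := by
  simp only [catalan_eq_centralBinom_div]
  decide

namespace PowerSeries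

theorem mk_catalan_succ_eq_sq {R : Type*} [CommRing R] :
    (mk fun n => (catalan (n + 1) : R)) = (1 + X * mk fun n => (catalan (n + 1) : R)) ^ 2 := by
  set C := mk fun n => (catalan (n + 1) : R)
  set c := catalanSeries.map (Nat.castRingHom R)
  have hc : c = X * C + 1 := by
    simpa [c, coeff_map, ← coeff_zero_eq_constantCoeff_apply] using eq_X_mul_shift_add_const c
  have hquad : c ^ 2 * X + 1 = c := by
    simpa using congrArg (map (Nat.castRingHom R)) catalanSeries_sq_mul_X_add_one
  apply X_mul_cancel
  linear_combination (X * (c + 1 + X * C) - 1) * hc - hquad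

theorem eq_of_sq_eq_sq_of_constantCoeff_eq {R : Type*} [CommRing R] [IsDomain R]
    [NeZero (2 : R)] {a b : R⟦X⟧} (h : a ^ 2 = b ^ 2) (h0 : constantCoeff a = constantCoeff b)
    (hb : constantCoeff b ≠ 0) : a = b := by
  refine (sq_eq_sq_iff_eq_or_eq_neg.mp h).resolve_right fun hab => hb ?_
  have hneg : constantCoeff b = -constantCoeff b := by simpa [h0] using congrArg constantCoeff hab
  have h2 : (2 : R) * constantCoeff b = 0 := by linear_combination hneg
  exact (mul_eq_zero.mp h2).resolve_left two_ne_zero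

theorem add_sq_mul_inv_eq_inv {K : Type*} [Field K] {C : K⟦X⟧} (hC : C = (1 + X * C) ^ 2) :
    C + ((1 - X) * C - 1) ^ 2 * (1 - X - ((1 - X) ^ 2 * C - 1))⁻¹ = (1 - X - X * C)⁻¹ := by
  have hC0 : constantCoeff C = 1 := by simpa using congrArg constantCoeff hC
  set D := 1 - X - ((1 - X) ^ 2 * C - 1)
  have hD : D⁻¹ * D = 1 := PowerSeries.inv_mul_cancel _ (by simp [D, hC0])
  rw [eq_inv_iff_mul_eq_one (by simp [hC0])]
  apply mul_right_cancel₀ (b := D) (fun h => by simp [h] at hD)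
  linear_combination ((1 - X) * C - 1) ^ 2 * (1 - X - X * C) * hD + hC

theorem coeff_succ_of_mul_eq_one {R : Type*} [CommRing R] {G C : R⟦X⟧}
    (h : G * (1 - X - X * C) = 1) (n : ℕ) :
    coeff (n + 1) G = coeff n G + ∑ p ∈ antidiagonal n, coeff p.1 C * coeff p.2 G := by
  have hG : G = 1 + X * ((1 + C) * G) := by linear_combination h
  conv_lhs => rw [hG]
  rw [map_add, coeff_succ_X_mul, add_mul, one_mul, map_add, coeff_mul, coeff_one,
    if_neg n.succ_ne_zero, zero_add]

end PowerSeries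

/-- Let `C(x) = ∑ C_{n+1} xⁿ` be the shifted Catalan generating function (so
`2x²C = 1 - 2x - √(1-4x)`), let `S = √(1-4x)` be the formal square root of `1-4x` with
constant term 1, and set `L = (1-x)C - 1`, `M = (1-x)²C - 1`.  Then
`G = C + L²/(1-x-M)` equals `2x/(-1 + 4x - 2x² + √(1-4x))`, and its coefficients begin
1, 2, 6, 21, 78, 298, 1157, 4539. -/
theorem stmt_6 (S C L M G : PowerSeries ℚ)
    (hS : S ^ 2 = 1 - 4 * X) (hS0 : PowerSeries.constantCoeff S = 1)
    (hC : C = PowerSeries.mk fun n => (catalan (n + 1) : ℚ))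
    (hL : L = (1 - X) * C - 1) (hM : M = (1 - X) ^ 2 * C - 1)
    (hG : G = C + L ^ 2 * (1 - X - M)⁻¹) :
    G * (-1 + 4 * X - 2 * X ^ 2 + S) = 2 * X ∧
    PowerSeries.coeff 0 G = 1 ∧ PowerSeries.coeff 1 G = 2 ∧
    PowerSeries.coeff 2 G = 6 ∧ PowerSeries.coeff 3 G = 21 ∧
    PowerSeries.coeff 4 G = 78 ∧ PowerSeries.coeff 5 G = 298 ∧
    PowerSeries.coeff 6 G = 1157 ∧ PowerSeries.coeff 7 G = 4539 := by
  have hCsq : C = (1 + X * C) ^ 2 := hC ▸ mk_catalan_succ_eq_sq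
  have hC0 : constantCoeff C = 1 := by simpa using congrArg constantCoeff hCsq
  have hGD : G * (1 - X - X * C) = 1 := by
    rw [hG, hL, hM, add_sq_mul_inv_eq_inv hCsq]
    exact PowerSeries.inv_mul_cancel _ (by simp [hC0])
  have hSC : S = 1 - 2 * X - 2 * X ^ 2 * C :=
    eq_of_sq_eq_sq_of_constantCoeff_eq (by linear_combination hS + 4 * X ^ 2 * hCsq)
      (by simp [hS0]) (by simp)
  refine ⟨by linear_combination 2 * X * hGD + G * hSC, ?_⟩
  have hG0 : coeff 0 G = 1 := by simpa using congrArg constantCoeff hGD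
  norm_num [coeff_succ_of_mul_eq_one hGD, hG0, hC, Finset.Nat.sum_antidiagonal_succ,
    catalan_four_to_seven, catalan_three, catalan_two]
end

section
/- The rational function identity: (3x^5 + x^4 − 5x^3 + 7x^2 − 5x + 1)/(−3x^6 + 4x^5 + 8x^4 − 14x^3 + 15x^2 − 7x + 1) = F(x) + L(x)^2/(1 − x − M(x)) where F(x) = (−x^5 + x^4 + 3x^3 − 4x^2 + 4x − 1)/(x^6 − 4x^5 − 4x^4 + 9x^3 − 11x^2 + 6x − 1), L(x) = (1−x)F(x) − 1, and M(x) = (1−x)^2 F(x) − 1, as an identity of formal power series (equivalently of rational functions). -/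
/-!
Write `F = N/D` (`hexNum/hexDen`) and let `N'/D'` (`clusterNum/clusterDen`) be the right-hand side.
Clearing `D` turns the denominator of the cluster term into a polynomial:
`(1 - x - M) D = (2 - x) D - (1 - x)² N`, which is exactly `-D'`.
Hence `F + L²/(1 - x - M) = F - (L D)²/(D D')`, and with `L D = (1 - x) N - D` the claim reduces
to the polynomial identity `N D' - ((1 - x) N - D)² = D N'`.
-/

open PowerSeries

section Polynomials

variable {R : Type*} [CommRing R] (x : R)

def hexNum : R := -x ^ 5 + x ^ 4 + 3 * x ^ 3 - 4 * x ^ 2 + 4 * x - 1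

def hexDen : R := x ^ 6 - 4 * x ^ 5 - 4 * x ^ 4 + 9 * x ^ 3 - 11 * x ^ 2 + 6 * x - 1

def clusterNum : R := 3 * x ^ 5 + x ^ 4 - 5 * x ^ 3 + 7 * x ^ 2 - 5 * x + 1

def clusterDen : R := -3 * x ^ 6 + 4 * x ^ 5 + 8 * x ^ 4 - 14 * x ^ 3 + 15 * x ^ 2 - 7 * x + 1

theorem clusterDen_eq : clusterDen x = (1 - x) ^ 2 * hexNum x - (2 - x) * hexDen x := by
  simp only [clusterDen, hexNum, hexDen]
  ring

theorem hexDen_mul_clusterNum :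
    hexDen x * clusterNum x = hexNum x * clusterDen x - ((1 - x) * hexNum x - hexDen x) ^ 2 := by
  simp only [clusterNum, clusterDen, hexNum, hexDen]
  ring

end Polynomials

theorem constantCoeff_hexDen {R : Type*} [CommRing R] :
    constantCoeff (hexDen (X : R⟦X⟧)) = -1 := by
  simp [hexDen]

theorem constantCoeff_clusterDen {R : Type*} [CommRing R] :
    constantCoeff (clusterDen (X : R⟦X⟧)) = 1 := by
  simp [clusterDen]

theorem PowerSeries.inv_eq_mul_inv_of_mul_eq {k : Type*} [Field k] {a b c : k⟦X⟧} (h : a * b = c)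
    (hc : constantCoeff c ≠ 0) : a⁻¹ = b * c⁻¹ := by
  have ha : constantCoeff a ≠ 0 := left_ne_zero_of_mul (by rwa [← map_mul, h])
  rw [inv_eq_iff_mul_eq_one ha]
  linear_combination c⁻¹ * h + PowerSeries.inv_mul_cancel c hc

open PowerSeries in
/-- With `F = (-x⁵ + x⁴ + 3x³ - 4x² + 4x - 1)/(x⁶ - 4x⁵ - 4x⁴ + 9x³ - 11x² + 6x - 1)`,
`L = (1-x)F - 1` and `M = (1-x)²F - 1`, we have
`F + L²/(1 - x - M) = (3x⁵ + x⁴ - 5x³ + 7x² - 5x + 1)/(-3x⁶ + 4x⁵ + 8x⁴ - 14x³ + 15x² - 7x + 1)`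
as formal power series over ℚ. -/
theorem stmt_19 (F L M : PowerSeries ℚ)
    (hF : F = (-X ^ 5 + X ^ 4 + 3 * X ^ 3 - 4 * X ^ 2 + 4 * X - 1)
      * (X ^ 6 - 4 * X ^ 5 - 4 * X ^ 4 + 9 * X ^ 3 - 11 * X ^ 2 + 6 * X - 1)⁻¹)
    (hL : L = (1 - X) * F - 1) (hM : M = (1 - X) ^ 2 * F - 1) :
    F + L ^ 2 * (1 - X - M)⁻¹
      = (3 * X ^ 5 + X ^ 4 - 5 * X ^ 3 + 7 * X ^ 2 - 5 * X + 1)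
        * (-3 * X ^ 6 + 4 * X ^ 5 + 8 * X ^ 4 - 14 * X ^ 3 + 15 * X ^ 2 - 7 * X + 1)⁻¹ := by
  change F + L ^ 2 * (1 - X - M)⁻¹ = clusterNum X * (clusterDen X)⁻¹
  have hD : constantCoeff (hexDen (X : ℚ⟦X⟧)) ≠ 0 := by norm_num [constantCoeff_hexDen]
  have hD' : constantCoeff (clusterDen (X : ℚ⟦X⟧)) ≠ 0 := by norm_num [constantCoeff_clusterDen]
  have hFD : F * hexDen X = hexNum X := (eq_mul_inv_iff_mul_eq hD).1 hF
  have hLD : L * hexDen X = (1 - X) * hexNum X - hexDen X := by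
    rw [hL, sub_mul, mul_assoc, hFD, one_mul]
  have hMD : (1 - X - M) * -hexDen X = clusterDen X := by
    rw [hM]
    linear_combination (1 - X) ^ 2 * hFD - clusterDen_eq (X : ℚ⟦X⟧)
  rw [inv_eq_mul_inv_of_mul_eq hMD hD', eq_mul_inv_iff_mul_eq hD']
  refine mul_left_cancel₀ (ne_zero_of_map hD) ?_
  calc hexDen X * ((F + L ^ 2 * (-hexDen X * (clusterDen X)⁻¹)) * clusterDen X)
      = F * hexDen X * clusterDen X
          - (L * hexDen X) ^ 2 * ((clusterDen X)⁻¹ * clusterDen X) := by ring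
    _ = hexNum X * clusterDen X - ((1 - X) * hexNum X - hexDen X) ^ 2 := by
      rw [hFD, hLD, PowerSeries.inv_mul_cancel _ hD', mul_one]
    _ = hexDen X * clusterNum X := (hexDen_mul_clusterNum _).symm
end
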